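/- Let Λ = ℚ[p_1, p_2, …] be the polynomial ring over ℚ in countably many variables p_k indexed by positive integers. Define e_m ∈ Λ by e_0 = 1 and m·e_m = Σ_{i=1}^m (−1)^{i−1} p_i·e_{m−i} for m ≥ 1; let D_1 be the unique ℚ-linear derivation of Λ with D_1(p_k) = k for all k ≥ 1; and for r ∈ ℕ let ε_r : Λ → ℚ be the ℚ-algebra homomorphism with ε_r(p_k) = r. Then for all h, m, r with 1 ≤ h ≤ m and h ≤ r, ε_r(D_1^h(e_m)) = C(r−h, m−h), where C(·,·) is the binomial coefficient. -/

import Mathlib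

open MvPolynomial

/-- The derivation `D_1` of `Λ = ℚ[p_1, p_2, …]` with `D_1(p_k) = k` for all `k ≥ 1`. -/
noncomputable def D1 : Derivation ℚ (MvPolynomial ℕ+ ℚ) (MvPolynomial ℕ+ ℚ) :=
  mkDerivation ℚ fun k : ℕ+ => C (((k : ℕ) : ℚ))

/-- The `ℚ`-algebra homomorphism `ε_r : Λ → ℚ` with `ε_r(p_k) = r` for all `k ≥ 1`. -/
noncomputable def epsHom (r : ℚ) : MvPolynomial ℕ+ ℚ →ₐ[ℚ] ℚ :=
  aeval fun _ : ℕ+ => r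

/-!
With `E(t) = Σ e_m t^m` and `P(t) = Σ (-1)^(k-1) p_k t^k`, Newton's identities say
`t E' = P E`. Since `D_1 P = t/(1+t)^2`, the series `t E/(1+t)` satisfies the same
differentiated recurrence as `D_1 E`, so `D_1 e_m = Σ_{j<m} (-1)^(m-1-j) e_j`, i.e.
`D_1 e_(m+1) = e_m - D_1 e_m`. Likewise `ε_r E = (1+t)^r`, and the recurrence turns this into
`ε_r (D_1^h E) = t^h (1+t)^(r-h)` for `h ≤ r`, whose coefficients are the binomials claimed.
-/

open Finset

section AltSum

variable {R : Type*} [CommRing R]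

/-- The coefficients of `t A(t) / (1 + t)`. -/
def altSum (a : ℕ → R) (m : ℕ) : R :=
  ∑ i ∈ range m, (-1) ^ i * a (m - (i + 1))

/-- The coefficients of `t A(t) / (1 + t)^2`. -/
def weightedAltSum (a : ℕ → R) (m : ℕ) : R :=
  ∑ i ∈ range m, (-1) ^ i * ((i : R) + 1) * a (m - (i + 1))

@[simp] lemma altSum_zero (a : ℕ → R) : altSum a 0 = 0 := rfl

lemma altSum_succ (a : ℕ → R) (m : ℕ) : altSum a (m + 1) = a m - altSum a m := by
  simp only [altSum, sum_range_succ', pow_succ, pow_zero, Nat.add_sub_add_right, Nat.sub_zero,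
    one_mul, mul_neg_one, neg_mul, sum_neg_distrib]
  ring

lemma altSum_congr {a b : ℕ → R} {m : ℕ} (hab : ∀ k < m, a k = b k) :
    altSum a m = altSum b m :=
  sum_congr rfl fun i hi => by rw [hab _ (by simp at hi; omega)]

lemma weightedAltSum_succ_add (a : ℕ → R) (m : ℕ) :
    weightedAltSum a (m + 1) + weightedAltSum a m = altSum a (m + 1) := by
  rw [altSum_succ, altSum, weightedAltSum, weightedAltSum, sum_range_succ', sub_eq_add_neg,
    ← sum_neg_distrib, add_right_comm, ← sum_add_distrib, add_comm]
  simp only [pow_succ, pow_zero, Nat.add_sub_add_right, Nat.sub_zero]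
  congr 1
  · simp
  · refine sum_congr rfl fun i _ => ?_
    push_cast
    ring

end AltSum

lemma natCast_mul_altSum_choose (r m : ℕ) :
    (r : ℚ) * altSum (fun k => (r.choose k : ℚ)) m = m * r.choose m := by
  induction m with
  | zero => simp
  | succ m ih =>
    rw [altSum_succ, mul_sub, ih]
    rcases le_or_gt m r with hmr | hmr
    · have := congrArg (Nat.cast (R := ℚ)) (Nat.choose_succ_right_eq r m)
      push_cast [Nat.cast_sub hmr] at this ⊢
      linear_combination -this
    · simp [Nat.choose_eq_zero_of_lt hmr, Nat.choose_eq_zero_of_lt (Nat.lt_succ_of_lt hmr)]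

noncomputable def newtonSum (a : ℕ → MvPolynomial ℕ+ ℚ) (m : ℕ) : MvPolynomial ℕ+ ℚ :=
  ∑ i ∈ range m, C ((-1 : ℚ) ^ i) * (X i.succPNat * a (m - (i + 1)))

lemma newtonSum_congr {a b : ℕ → MvPolynomial ℕ+ ℚ} {m : ℕ} (hab : ∀ k < m, a k = b k) :
    newtonSum a m = newtonSum b m :=
  sum_congr rfl fun i hi => by rw [hab _ (by simp at hi; omega)]

lemma newtonSum_add (a b : ℕ → MvPolynomial ℕ+ ℚ) (m : ℕ) :
    newtonSum a m + newtonSum b m = newtonSum (a + b) m := by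
  simp only [newtonSum, ← sum_add_distrib, Pi.add_apply, mul_add]

lemma newtonSum_succ_of_eq_zero {a : ℕ → MvPolynomial ℕ+ ℚ} (ha : a 0 = 0) (m : ℕ) :
    newtonSum a (m + 1) = newtonSum (fun k => a (k + 1)) m := by
  rw [newtonSum, sum_range_succ, Nat.sub_self, ha, mul_zero, mul_zero, add_zero]
  exact sum_congr rfl fun i hi => by
    rw [show m + 1 - (i + 1) = m - (i + 1) + 1 by simp at hi; omega]

lemma D1_X (k : ℕ+) : D1 (X k) = ((k : ℕ) : MvPolynomial ℕ+ ℚ) := by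
  simp [D1, mkDerivation_X]

lemma D1_newtonSum (a : ℕ → MvPolynomial ℕ+ ℚ) (m : ℕ) :
    D1 (newtonSum a m) = weightedAltSum a m + newtonSum (fun k => D1 (a k)) m := by
  simp only [newtonSum, weightedAltSum, map_sum, ← sum_add_distrib]
  refine sum_congr rfl fun i _ => ?_
  rw [← smul_eq_C_mul, D1.map_smul, D1.leibniz, D1_X, smul_eq_C_mul]
  simp only [smul_eq_mul, map_pow, map_neg, map_one, Nat.succPNat_coe, Nat.cast_succ]
  ring

lemma epsHom_newtonSum (r : ℚ) (a : ℕ → MvPolynomial ℕ+ ℚ) (m : ℕ) :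
    epsHom r (newtonSum a m) = r * altSum (fun k => epsHom r (a k)) m := by
  simp only [newtonSum, altSum, map_sum, mul_sum, map_mul, epsHom, aeval_C, aeval_X,
    Algebra.algebraMap_self, RingHom.id_apply]
  exact sum_congr rfl fun i _ => by ring

noncomputable def binomGenPoly (r h : ℕ) : Polynomial ℚ :=
  Polynomial.X ^ h * (1 + Polynomial.X) ^ (r - h)

lemma binomGenPoly_coeff_succ {h r : ℕ} (hhr : h + 1 ≤ r) (m : ℕ) :
    (binomGenPoly r (h + 1)).coeff (m + 1) =
      (binomGenPoly r h).coeff m - (binomGenPoly r (h + 1)).coeff m := by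
  have key : (1 + Polynomial.X) * binomGenPoly r (h + 1) = Polynomial.X * binomGenPoly r h := by
    rw [binomGenPoly, binomGenPoly, show r - h = r - (h + 1) + 1 by omega]
    ring
  have := congrArg (Polynomial.coeff · (m + 1)) key
  simp only [one_add_mul, Polynomial.coeff_add, Polynomial.coeff_X_mul] at this
  linarith

lemma coeff_binomGenPoly {h m : ℕ} (r : ℕ) (hhm : h ≤ m) :
    (binomGenPoly r h).coeff m = (r - h).choose (m - h) := by
  rw [binomGenPoly, Polynomial.coeff_X_pow_mul', if_pos hhm, Polynomial.coeff_one_add_X_pow]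

section NewtonSequence

variable {E : ℕ → MvPolynomial ℕ+ ℚ}
  (hE : ∀ m : ℕ, (m : MvPolynomial ℕ+ ℚ) * E m = newtonSum E m)
include hE

lemma natCast_mul_altSum (m : ℕ) :
    (m : MvPolynomial ℕ+ ℚ) * altSum E m = weightedAltSum E m + newtonSum (altSum E) m := by
  induction m with
  | zero => simp [weightedAltSum, newtonSum]
  | succ m ih =>
    have hW := weightedAltSum_succ_add E m
    have hN : newtonSum (altSum E) (m + 1) + newtonSum (altSum E) m = (m : _) * E m := by
      rw [newtonSum_succ_of_eq_zero (altSum_zero E), newtonSum_add, hE]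
      exact newtonSum_congr fun k _ => by simp [altSum_succ]
    rw [altSum_succ] at hW ⊢
    push_cast
    linear_combination -ih - hW - hN

variable (E0 : E 0 = 1)
include E0

lemma D1_eq_altSum (m : ℕ) : D1 (E m) = altSum E m := by
  induction m using Nat.strong_induction_on with
  | _ m ih =>
  rcases Nat.eq_zero_or_pos m with rfl | hm
  · simp [E0]
  · have hD : (m : MvPolynomial ℕ+ ℚ) * D1 (E m) = D1 ((m : MvPolynomial ℕ+ ℚ) * E m) := by
      rw [D1.leibniz, D1.map_natCast, smul_zero, add_zero, smul_eq_mul]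
    refine mul_left_cancel₀ (Nat.cast_ne_zero.mpr hm.ne') ?_
    rw [hD, hE, D1_newtonSum, natCast_mul_altSum hE, newtonSum_congr fun k hk => ih k hk]

lemma epsHom_eq_choose (r m : ℕ) : epsHom r (E m) = r.choose m := by
  induction m using Nat.strong_induction_on with
  | _ m ih =>
  rcases Nat.eq_zero_or_pos m with rfl | hm
  · simp [E0]
  · refine mul_left_cancel₀ (Nat.cast_ne_zero.mpr hm.ne' : (m : ℚ) ≠ 0) ?_
    have := congrArg (epsHom r) (hE m)
    rw [map_mul, map_natCast, epsHom_newtonSum, altSum_congr fun k hk => ih k hk] at this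
    rw [this, natCast_mul_altSum_choose]

lemma iterate_D1_zero (h : ℕ) : (D1.toLinearMap ^ (h + 1)) (E 0) = 0 := by
  rw [pow_succ, Module.End.mul_apply, Derivation.coeFn_coe, D1_eq_altSum hE E0,
    altSum_zero, map_zero]

lemma iterate_D1_succ (h m : ℕ) :
    (D1.toLinearMap ^ (h + 1)) (E (m + 1)) =
      (D1.toLinearMap ^ h) (E m) - (D1.toLinearMap ^ (h + 1)) (E m) := by
  simp only [pow_succ, Module.End.mul_apply, Derivation.coeFn_coe, D1_eq_altSum hE E0,
    altSum_succ, map_sub]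

lemma epsHom_iterate_D1 {h r : ℕ} (hhr : h ≤ r) (m : ℕ) :
    epsHom r ((D1.toLinearMap ^ h) (E m)) = (binomGenPoly r h).coeff m := by
  induction h generalizing m with
  | zero => simp [epsHom_eq_choose hE E0, binomGenPoly, Polynomial.coeff_one_add_X_pow]
  | succ h ih =>
    induction m with
    | zero => simp [iterate_D1_zero hE E0, binomGenPoly]
    | succ m ihm =>
      rw [iterate_D1_succ hE E0, map_sub, ih (by omega), ihm, binomGenPoly_coeff_succ hhr]

end NewtonSequence

theorem stmt13 (E : ℕ → MvPolynomial ℕ+ ℚ) (E0 : E 0 = 1)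
    (Erec : ∀ m : ℕ, 1 ≤ m → (m : ℚ) • E m =
      ∑ i ∈ Finset.range m, C ((-1 : ℚ) ^ i) * (X i.succPNat * E (m - (i + 1))))
    (h m r : ℕ) (hhm : h ≤ m) (hhr : h ≤ r) :
    epsHom (r : ℚ) ((D1.toLinearMap ^ h) (E m)) = ((r - h).choose (m - h) : ℚ) := by
  have hE : ∀ m : ℕ, (m : MvPolynomial ℕ+ ℚ) * E m = newtonSum E m := by
    intro m
    rcases Nat.eq_zero_or_pos m with rfl | hm
    · simp [newtonSum]
    · rw [newtonSum, ← Erec m hm, Nat.cast_smul_eq_nsmul, nsmul_eq_mul]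
  rw [epsHom_iterate_D1 hE E0 hhr, coeff_binomGenPoly r hhm]
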